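/- For all integers j ≥ 2, the identity 2 * (sum over j1 + j2 = j - 1 of a_{j1} * d_{j2}) + 2*a_{j-1} = d_j holds. -/

import Mathlib

def a (j : ℕ) : ℚ :=
  (Nat.factorial (2 * j) : ℚ) / ((Nat.factorial j : ℚ) * (Nat.factorial (j + 1) : ℚ))

def d (j : ℕ) : ℚ :=
  if j < 2 then 0
  else ∑ p ∈ Finset.HasAntidiagonal.antidiagonal (j - 2),
        ∑ q ∈ Finset.HasAntidiagonal.antidiagonal p.2,
          2 * ((p.1 : ℚ) + 1) * a p.1 * a q.1 * a q.2

/-!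
`a` is the Catalan sequence `C`, and with `B j = (j + 1) C j` the central binomial coefficients,
the symmetrization `∑_{i+k=n} C i C k ((i + 1) + (k + 1)) = (n + 2) C (n + 1)` of the Catalan
recursion gives `2 ∑_{i+k=n} C i B k = B (n + 1)`. Peeling off the boundary term of this
convolution yields the closed form `d (n + 1) = B (n + 1) - 2 B n`, and then both sides of the
identity reduce to `B j - 2 B (j - 1)`.
-/

open Finset Nat

theorem a_eq_catalan (j : ℕ) : a j = catalan j := by
  have h := congrArg (Nat.cast : ℕ → ℚ) (succ_mul_catalan_eq_centralBinom j)
  rw [centralBinom, Nat.cast_choose ℚ (by omega : j ≤ 2 * j),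
    show 2 * j - j = j by omega] at h
  push_cast at h
  rw [a, factorial_succ, eq_comm, ← mul_right_inj' (by positivity : (j : ℚ) + 1 ≠ 0), h]
  push_cast
  field_simp

theorem two_mul_sum_antidiagonal_catalan_mul_centralBinom (n : ℕ) :
    2 * ∑ p ∈ antidiagonal n, catalan p.1 * centralBinom p.2 = centralBinom (n + 1) := by
  rw [two_mul]
  nth_rewrite 2 [← Nat.sum_antidiagonal_swap]
  rw [← sum_add_distrib, ← succ_mul_catalan_eq_centralBinom, catalan_succ', mul_sum]
  refine sum_congr rfl fun p hp => ?_
  rw [← mem_antidiagonal.mp hp, Prod.fst_swap, Prod.snd_swap, ← succ_mul_catalan_eq_centralBinom,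
    ← succ_mul_catalan_eq_centralBinom]
  ring

theorem two_mul_sum_antidiagonal_centralBinom_mul_catalan (n : ℕ) :
    2 * ∑ p ∈ antidiagonal n, centralBinom p.1 * catalan p.2 = centralBinom (n + 1) := by
  rw [← two_mul_sum_antidiagonal_catalan_mul_centralBinom, ← Nat.sum_antidiagonal_swap]
  simp only [Prod.fst_swap, Prod.snd_swap, mul_comm]

theorem two_mul_sum_antidiagonal_catalan_mul_centralBinom_succ (n : ℕ) :
    2 * ∑ p ∈ antidiagonal n, catalan p.1 * centralBinom (p.2 + 1) + 2 * catalan (n + 1) =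
      centralBinom (n + 2) := by
  rw [← two_mul_sum_antidiagonal_catalan_mul_centralBinom (n + 1), Nat.sum_antidiagonal_succ',
    centralBinom_zero]
  ring

theorem two_mul_sum_antidiagonal_centralBinom_mul_catalan_succ (n : ℕ) :
    2 * ∑ p ∈ antidiagonal n, centralBinom p.1 * catalan (p.2 + 1) + 2 * centralBinom (n + 1) =
      centralBinom (n + 2) := by
  rw [← two_mul_sum_antidiagonal_centralBinom_mul_catalan (n + 1), Nat.sum_antidiagonal_succ',
    catalan_zero]
  ring

theorem d_add_one (n : ℕ) : d (n + 1) = centralBinom (n + 1) - 2 * (centralBinom n : ℚ) := by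
  rcases n with _ | n
  · norm_num [d, centralBinom]
  have inner (p : ℕ × ℕ) :
      ∑ q ∈ antidiagonal p.2, 2 * ((p.1 : ℚ) + 1) * a p.1 * a q.1 * a q.2 =
        2 * (centralBinom p.1 * catalan (p.2 + 1) : ℕ) := by
    simp only [a_eq_catalan, mul_assoc, ← mul_sum, catalan_succ',
      ← succ_mul_catalan_eq_centralBinom]
    push_cast
    ring
  have h := congrArg (Nat.cast : ℕ → ℚ) (two_mul_sum_antidiagonal_centralBinom_mul_catalan_succ n)
  push_cast at h
  rw [d, if_neg (by omega), show n + 1 + 1 - 2 = n from rfl, sum_congr rfl fun p _ => inner p,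
    ← mul_sum]
  push_cast
  linear_combination h

theorem ad_convolution (j : ℕ) (hj : 2 ≤ j) :
    2 * (∑ p ∈ Finset.HasAntidiagonal.antidiagonal (j - 1), a p.1 * d p.2) + 2 * a (j - 1) = d j := by
  obtain ⟨n, rfl⟩ : ∃ n, j = n + 2 := ⟨j - 2, by omega⟩
  have hB := congrArg (Nat.cast : ℕ → ℚ) (two_mul_sum_antidiagonal_catalan_mul_centralBinom n)
  have hB' := congrArg (Nat.cast : ℕ → ℚ)
    (two_mul_sum_antidiagonal_catalan_mul_centralBinom_succ n)
  push_cast at hB hB'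
  have hd0 : d 0 = 0 := rfl
  rw [show n + 2 - 1 = n + 1 from rfl, Nat.sum_antidiagonal_succ', hd0]
  simp only [a_eq_catalan, d_add_one, mul_sub, mul_left_comm _ (2 : ℚ), sum_sub_distrib, ← mul_sum]
  linear_combination hB' - 2 * hB
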